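/- Let A be the (n+1)×(n+1) max-plus bordered matrix with A_{1,j+1} = −q_j, A_{j+1,1} = p_j for 1 ≤ j ≤ n and all other entries −∞ (p, q ∈ ℝ^n). Then for every k ≥ 1, every diagonal entry of the max-plus power A^{⊗(2k−1)} equals −∞, and the max-plus trace of A^{⊗2k} equals k·max_{1≤j≤n}(p_j − q_j). -/

import Mathlib

/-- Max-plus identity matrix over ℝ ∪ {−∞}. -/
noncomputable def mpId (N : ℕ) : Fin N → Fin N → WithBot ℝ :=
  fun i j => if i = j then ((0 : ℝ) : WithBot ℝ) else ⊥

/-- Max-plus matrix product over ℝ ∪ {−∞}. -/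
noncomputable def mpMul {N : ℕ} (A B : Fin N → Fin N → WithBot ℝ) :
    Fin N → Fin N → WithBot ℝ :=
  fun i k => Finset.univ.sup fun j => A i j + B j k

/-- Max-plus matrix power. -/
noncomputable def mpPow {N : ℕ} (A : Fin N → Fin N → WithBot ℝ) :
    ℕ → Fin N → Fin N → WithBot ℝ
  | 0 => mpId N
  | m + 1 => mpMul (mpPow A m) A

/-- Max-plus trace: the maximum of the diagonal entries. -/
noncomputable def mpTrace {N : ℕ} (A : Fin N → Fin N → WithBot ℝ) : WithBot ℝ :=
  Finset.univ.sup fun i => A i i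

/-- The bordered (n+1)×(n+1) matrix with A_{1,j+1} = −q_j, A_{j+1,1} = p_j and
all other entries −∞. -/
noncomputable def bordered {n : ℕ} (p q : Fin n → ℝ) :
    Fin (n + 1) → Fin (n + 1) → WithBot ℝ :=
  fun i j =>
    if hi : i = 0 then
      (if hj : j = 0 then ⊥ else ((-q (j.pred hj) : ℝ) : WithBot ℝ))
    else if hj : j = 0 then ((p (i.pred hi) : ℝ) : WithBot ℝ) else ⊥


/-
Write `M = q⁻p`. The square `A ⊗ A` is `M` in the corner `(0,0)`, `p_i - q_j` on the lower block
and `−∞` on the border, and one more factor `A` brings it back to `M ⊗ A`. Hence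
`A^{2k+1} = M^k ⊗ A`, whose diagonal is that of `A`, namely `−∞`, and `A^{2k+2} = M^k ⊗ A²`,
whose trace is `M^k ⊗ tr A² = M^{k+1}`: the corner and the diagonal `p_j - q_j` of the lower
block both contribute `M`.
-/

open Finset

theorem Fin.sup_univ_succ {α : Type*} [SemilatticeSup α] [OrderBot α] {n : ℕ}
    (f : Fin (n + 1) → α) : univ.sup f = f 0 ⊔ univ.sup fun i : Fin n => f i.succ := by
  rw [Fin.univ_succ, sup_cons, sup_map]
  rfl

theorem WithBot.add_finset_sup {α ι : Type*} [Add α] [LinearOrder α] [AddLeftMono α]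
    (c : WithBot α) (s : Finset ι) (f : ι → WithBot α) :
    c + s.sup f = s.sup fun i => c + f i :=
  apply_sup_eq_sup_comp_of_linearOrder (c + ·) (fun _ _ h => add_le_add_right h c)
    (WithBot.add_bot c)

section MaxPlus

variable {N : ℕ}

noncomputable def mpSMul (c : WithBot ℝ) (X : Fin N → Fin N → WithBot ℝ) :
    Fin N → Fin N → WithBot ℝ :=
  fun i j => c + X i j

theorem mpPow_succ (A : Fin N → Fin N → WithBot ℝ) (m : ℕ) :
    mpPow A (m + 1) = mpMul (mpPow A m) A := rfl

theorem mpId_mpMul (X : Fin N → Fin N → WithBot ℝ) : mpMul (mpId N) X = X := by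
  funext i k
  refine le_antisymm (Finset.sup_le fun j _ => ?_) (le_sup_of_le (mem_univ i) (by simp [mpId]))
  by_cases h : i = j <;> simp [mpId, h]

theorem mpPow_one (A : Fin N → Fin N → WithBot ℝ) : mpPow A 1 = A :=
  mpId_mpMul A

theorem mpSMul_zero (X : Fin N → Fin N → WithBot ℝ) : mpSMul 0 X = X := by
  funext i j
  exact zero_add _

theorem mpSMul_mpSMul (c d : WithBot ℝ) (X : Fin N → Fin N → WithBot ℝ) :
    mpSMul c (mpSMul d X) = mpSMul (c + d) X := by
  funext i j
  exact (add_assoc c d _).symm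

theorem mpSMul_mpMul (c : WithBot ℝ) (X Y : Fin N → Fin N → WithBot ℝ) :
    mpMul (mpSMul c X) Y = mpSMul c (mpMul X Y) := by
  funext i k
  simp only [mpMul, mpSMul, WithBot.add_finset_sup, add_assoc]

theorem mpTrace_mpSMul (c : WithBot ℝ) (X : Fin N → Fin N → WithBot ℝ) :
    mpTrace (mpSMul c X) = c + mpTrace X :=
  (WithBot.add_finset_sup c univ _).symm

end MaxPlus

section Bordered

variable {n : ℕ} (p q : Fin n → ℝ)

@[simp] theorem bordered_zero_zero : bordered p q 0 0 = ⊥ := by simp [bordered]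

@[simp] theorem bordered_zero_succ (j : Fin n) :
    bordered p q 0 j.succ = ((-q j : ℝ) : WithBot ℝ) := by
  simp [bordered]

@[simp] theorem bordered_succ_zero (i : Fin n) : bordered p q i.succ 0 = p i := by
  simp [bordered]

@[simp] theorem bordered_succ_succ (i j : Fin n) : bordered p q i.succ j.succ = ⊥ := by
  simp [bordered]

theorem bordered_diag (i : Fin (n + 1)) : bordered p q i i = ⊥ := by
  cases i using Fin.cases <;> simp

/-- The paper's `q⁻p = max_j (p_j - q_j)`, taken in `WithBot ℝ` (it is `⊥` when `n = 0`). -/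
noncomputable def maxCycleWeight : WithBot ℝ :=
  univ.sup fun j => ((p j - q j : ℝ) : WithBot ℝ)

noncomputable def borderedSq : Fin (n + 1) → Fin (n + 1) → WithBot ℝ :=
  Fin.cases (Fin.cases (maxCycleWeight p q) fun _ => ⊥)
    fun i => Fin.cases ⊥ fun j => ((p i - q j : ℝ) : WithBot ℝ)

theorem mpMul_bordered_bordered : mpMul (bordered p q) (bordered p q) = borderedSq p q := by
  funext i k
  cases i using Fin.cases <;> cases k using Fin.cases <;>
    simp [mpMul, borderedSq, maxCycleWeight, Fin.sup_univ_succ, ← WithBot.coe_add,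
      neg_add_eq_sub, sub_eq_add_neg]

theorem mpMul_borderedSq_bordered :
    mpMul (borderedSq p q) (bordered p q) = mpSMul (maxCycleWeight p q) (bordered p q) := by
  funext i k
  cases i using Fin.cases with
  | zero => cases k using Fin.cases <;> simp [mpMul, mpSMul, borderedSq, Fin.sup_univ_succ]
  | succ i =>
    cases k using Fin.cases with
    | succ k => simp [mpMul, mpSMul, borderedSq, Fin.sup_univ_succ]
    | zero =>
      suffices (univ.sup fun j => ((p i - q j : ℝ) : WithBot ℝ) + p j) =
          maxCycleWeight p q + p i by
        simpa [mpMul, mpSMul, borderedSq, Fin.sup_univ_succ]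
      rw [maxCycleWeight, add_comm, WithBot.add_finset_sup]
      congr 1
      funext j
      rw [← WithBot.coe_add, ← WithBot.coe_add]
      ring_nf

theorem mpPow_bordered_odd (k : ℕ) :
    mpPow (bordered p q) (2 * k + 1) = mpSMul (k • maxCycleWeight p q) (bordered p q) := by
  induction k with
  | zero => rw [zero_nsmul, mpSMul_zero, mpPow_one]
  | succ k ih =>
    rw [show 2 * (k + 1) + 1 = 2 * k + 1 + 1 + 1 by ring, mpPow_succ, mpPow_succ, ih,
      mpSMul_mpMul, mpMul_bordered_bordered, mpSMul_mpMul, mpMul_borderedSq_bordered,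
      mpSMul_mpSMul, succ_nsmul]

theorem mpPow_bordered_even (k : ℕ) :
    mpPow (bordered p q) (2 * k + 2) = mpSMul (k • maxCycleWeight p q) (borderedSq p q) := by
  rw [mpPow_succ, mpPow_bordered_odd, mpSMul_mpMul, mpMul_bordered_bordered]

theorem mpTrace_borderedSq : mpTrace (borderedSq p q) = maxCycleWeight p q := by
  simp [mpTrace, borderedSq, Fin.sup_univ_succ, maxCycleWeight]

end Bordered

theorem bordered_maxplus_power_traces {n : ℕ} (hn : 0 < n) (p q : Fin n → ℝ) :
    ∀ k : ℕ, 1 ≤ k →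
      (∀ i, mpPow (bordered p q) (2 * k - 1) i i = ⊥) ∧
      mpTrace (mpPow (bordered p q) (2 * k)) =
        (((k : ℝ) * Finset.univ.sup' (Finset.univ_nonempty_iff.mpr ⟨⟨0, hn⟩⟩)
          (fun j => p j - q j) : ℝ) : WithBot ℝ) := by
  intro k hk
  obtain ⟨m, rfl⟩ := Nat.exists_eq_add_of_le' hk
  refine ⟨fun i => ?_, ?_⟩
  · rw [show 2 * (m + 1) - 1 = 2 * m + 1 by omega, mpPow_bordered_odd]
    exact (congrArg _ (bordered_diag p q i)).trans (WithBot.add_bot _)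
  · rw [show 2 * (m + 1) = 2 * m + 2 by ring, mpPow_bordered_even, mpTrace_mpSMul,
      mpTrace_borderedSq, ← succ_nsmul, ← nsmul_eq_mul, WithBot.coe_nsmul, Finset.coe_sup']
    rfl
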